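/- For every integer p ≥ 2, the graph H_p satisfies χ_rlid(H_p) = p + 1 = log₂(ω(H_p)) + 1; in particular ω(H_p) = 2^p while H_p admits an rlid-coloring with p + 1 colors and admits no rlid-coloring with fewer colors. -/
import Mathlib


open SimpleGraph Set

variable {V : Type*}

/-- The closed neighborhood of a vertex. -/
def closedNbhd (G : SimpleGraph V) (v : V) : Set V := insert v (G.neighborSet v)

/-- A (not necessarily proper) coloring `c : V → Fin k` is a relaxed locally identifying coloring
(rlid-coloring) if any two adjacent vertices with distinct closed neighborhoods receive distinct
sets of colors on their closed neighborhoods. -/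
def IsRlidColoring (G : SimpleGraph V) {k : ℕ} (c : V → Fin k) : Prop :=
  ∀ u v : V, G.Adj u v → closedNbhd G u ≠ closedNbhd G v →
    c '' closedNbhd G u ≠ c '' closedNbhd G v

/-- The relaxed locally identifying chromatic number: the least `k` such that `G` admits an
rlid-coloring with `k` colors. -/
noncomputable def rlidChromNum (G : SimpleGraph V) : ℕ :=
  sInf {k : ℕ | ∃ c : V → Fin k, IsRlidColoring G c}

/-- A graph is twin-free if distinct vertices have distinct closed neighborhoods. -/
def TwinFree (G : SimpleGraph V) : Prop :=
  ∀ u v : V, closedNbhd G u = closedNbhd G v → u = v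

/-- The graph `H_p`: a clique `K = {x_Q : Q ⊆ {1,…,p}}` of size `2^p` (encoded as `Sum.inl Q`),
and three independent sets `S₁ = {y_i}`, `S₂ = {y'_i}`, `S₃ = {z_i}` (encoded as
`Sum.inr (Sum.inl i)`, `Sum.inr (Sum.inr (Sum.inl i))`, `Sum.inr (Sum.inr (Sum.inr i))`).
Extra edges: `x_{{i}} y_i` and `y_i y'_i` for each `i`, and `x_Q z_i` whenever `|Q| ≥ 2` and
`i ∈ Q`. -/
def Hgraph (p : ℕ) : SimpleGraph (Finset (Fin p) ⊕ (Fin p ⊕ Fin p ⊕ Fin p)) :=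
  SimpleGraph.fromRel (fun x y =>
    match x, y with
    | Sum.inl Q, Sum.inl Q' => Q ≠ Q'
    | Sum.inl Q, Sum.inr (Sum.inl i) => Q = {i}
    | Sum.inr (Sum.inl i), Sum.inr (Sum.inr (Sum.inl j)) => i = j
    | Sum.inl Q, Sum.inr (Sum.inr (Sum.inr i)) => 2 ≤ Q.card ∧ i ∈ Q
    | _, _ => False)

section Aux

variable {p : ℕ}

private lemma adjXX {Q Q' : Finset (Fin p)} :
    (Hgraph p).Adj (Sum.inl Q) (Sum.inl Q') ↔ Q ≠ Q' := by
  simp [Hgraph]; tauto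

private lemma adjXY {Q : Finset (Fin p)} {i : Fin p} :
    (Hgraph p).Adj (Sum.inl Q) (Sum.inr (Sum.inl i)) ↔ Q = {i} := by
  simp [Hgraph]

private lemma adjYY' {i j : Fin p} :
    (Hgraph p).Adj (Sum.inr (Sum.inl i)) (Sum.inr (Sum.inr (Sum.inl j))) ↔ i = j := by
  simp [Hgraph]

private lemma adjXZ {Q : Finset (Fin p)} {i : Fin p} :
    (Hgraph p).Adj (Sum.inl Q) (Sum.inr (Sum.inr (Sum.inr i))) ↔ 2 ≤ Q.card ∧ i ∈ Q := by
  simp [Hgraph]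

private lemma mem_cn {α : Type*} {G : SimpleGraph α} {u v : α} :
    v ∈ closedNbhd G u ↔ v = u ∨ G.Adj u v := by
  simp [closedNbhd]

/-- cyclic successor on `Fin p` -/
def nxt {p : ℕ} (i : Fin p) : Fin p :=
  ⟨(i.val + 1) % p, Nat.mod_lt _ (Nat.lt_of_le_of_lt (Nat.zero_le _) i.isLt)⟩

private lemma nxt_ne (hp : 2 ≤ p) (i : Fin p) : nxt i ≠ i := by
  intro h
  have hv : (i.val + 1) % p = i.val := congrArg Fin.val h
  rcases Nat.lt_or_ge (i.val + 1) p with hlt | hge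
  · rw [Nat.mod_eq_of_lt hlt] at hv; omega
  · have hi := i.isLt
    have hip : i.val + 1 = p := by omega
    rw [hip, Nat.mod_self] at hv
    omega

/-- The (p+1)-coloring of `H_p`. -/
def hcol (p : ℕ) : Finset (Fin p) ⊕ (Fin p ⊕ Fin p ⊕ Fin p) → Fin (p + 1)
  | Sum.inl _ => 0
  | Sum.inr (Sum.inl i) => i.succ
  | Sum.inr (Sum.inr (Sum.inl i)) => (nxt i).succ
  | Sum.inr (Sum.inr (Sum.inr i)) => i.succ

@[simp] private lemma hcol_x (Q : Finset (Fin p)) : hcol p (Sum.inl Q) = 0 := rfl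
@[simp] private lemma hcol_y (i : Fin p) : hcol p (Sum.inr (Sum.inl i)) = i.succ := rfl
@[simp] private lemma hcol_y' (i : Fin p) :
    hcol p (Sum.inr (Sum.inr (Sum.inl i))) = (nxt i).succ := rfl
@[simp] private lemma hcol_z (i : Fin p) : hcol p (Sum.inr (Sum.inr (Sum.inr i))) = i.succ := rfl

private lemma imgX (Q : Finset (Fin p)) :
    hcol p '' closedNbhd (Hgraph p) (Sum.inl Q) = insert 0 (Fin.succ '' ↑Q) := by
  apply Set.Subset.antisymm
  · rintro b ⟨a, ha, rfl⟩
    rw [mem_cn] at ha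
    match a with
    | Sum.inl Q' => simp
    | Sum.inr (Sum.inl i) =>
      rcases ha with h | h
      · exact absurd h (by simp)
      · have hQ := adjXY.mp h
        exact Set.mem_insert_of_mem _ ⟨i, by simp [hQ], rfl⟩
    | Sum.inr (Sum.inr (Sum.inl i)) =>
      rcases ha with h | h
      · exact absurd h (by simp)
      · exact absurd h (by simp [Hgraph])
    | Sum.inr (Sum.inr (Sum.inr i)) =>
      rcases ha with h | h
      · exact absurd h (by simp)
      · exact Set.mem_insert_of_mem _ ⟨i, (adjXZ.mp h).2, rfl⟩
  · rintro b (rfl | ⟨i, hi, rfl⟩)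
    · exact ⟨Sum.inl Q, mem_cn.mpr (Or.inl rfl), rfl⟩
    · have hiQ : i ∈ Q := hi
      by_cases h2 : 2 ≤ Q.card
      · exact ⟨Sum.inr (Sum.inr (Sum.inr i)), mem_cn.mpr (Or.inr (adjXZ.mpr ⟨h2, hiQ⟩)), rfl⟩
      · have hc1 : Q.card ≤ 1 := by omega
        have hQ : Q = {i} := by
          apply Finset.eq_singleton_iff_unique_mem.mpr
          exact ⟨hiQ, fun j hj => Finset.card_le_one.mp hc1 j hj i hiQ⟩
        exact ⟨Sum.inr (Sum.inl i), mem_cn.mpr (Or.inr (adjXY.mpr hQ)), rfl⟩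

private lemma cnY (i : Fin p) :
    closedNbhd (Hgraph p) (Sum.inr (Sum.inl i)) =
      {Sum.inr (Sum.inl i), Sum.inl {i}, Sum.inr (Sum.inr (Sum.inl i))} := by
  ext a
  rw [mem_cn]
  match a with
  | Sum.inl Q' => simp [Hgraph, eq_comm]
  | Sum.inr (Sum.inl j) => simp [Hgraph, eq_comm]
  | Sum.inr (Sum.inr (Sum.inl j)) => simp [Hgraph, eq_comm]
  | Sum.inr (Sum.inr (Sum.inr j)) => simp [Hgraph, eq_comm]

private lemma cnY' (i : Fin p) :
    closedNbhd (Hgraph p) (Sum.inr (Sum.inr (Sum.inl i))) =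
      {Sum.inr (Sum.inr (Sum.inl i)), Sum.inr (Sum.inl i)} := by
  ext a
  rw [mem_cn]
  match a with
  | Sum.inl Q' => simp [Hgraph, eq_comm]
  | Sum.inr (Sum.inl j) => simp [Hgraph, eq_comm]
  | Sum.inr (Sum.inr (Sum.inl j)) => simp [Hgraph, eq_comm]
  | Sum.inr (Sum.inr (Sum.inr j)) => simp [Hgraph, eq_comm]

private lemma imgY (i : Fin p) :
    hcol p '' closedNbhd (Hgraph p) (Sum.inr (Sum.inl i)) =
      {i.succ, 0, (nxt i).succ} := by
  rw [cnY]
  simp [Set.image_insert_eq]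

private lemma imgY' (i : Fin p) :
    hcol p '' closedNbhd (Hgraph p) (Sum.inr (Sum.inr (Sum.inl i))) =
      {(nxt i).succ, i.succ} := by
  rw [cnY']
  simp [Set.image_insert_eq]

private lemma imgZ (hp : 2 ≤ p) (i : Fin p) :
    hcol p '' closedNbhd (Hgraph p) (Sum.inr (Sum.inr (Sum.inr i))) =
      {i.succ, 0} := by
  apply Set.Subset.antisymm
  · rintro b ⟨a, ha, rfl⟩
    rw [mem_cn] at ha
    match a with
    | Sum.inl Q' => simp
    | Sum.inr (Sum.inl j) =>
      rcases ha with h | h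
      · exact absurd h (by simp)
      · exact absurd h (by simp [Hgraph])
    | Sum.inr (Sum.inr (Sum.inl j)) =>
      rcases ha with h | h
      · exact absurd h (by simp)
      · exact absurd h (by simp [Hgraph])
    | Sum.inr (Sum.inr (Sum.inr j)) =>
      rcases ha with h | h
      · simp only [Sum.inr.injEq] at h
        subst h
        exact Or.inl rfl
      · exact absurd h (by simp [Hgraph])
  · rintro b (rfl | rfl)
    · exact ⟨Sum.inr (Sum.inr (Sum.inr i)), mem_cn.mpr (Or.inl rfl), rfl⟩
    · refine ⟨Sum.inl {i, nxt i}, mem_cn.mpr (Or.inr ?_), rfl⟩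
      refine (adjXZ.mpr ⟨?_, Finset.mem_insert_self _ _⟩).symm
      rw [Finset.card_insert_of_notMem (by simp only [Finset.mem_singleton]; exact fun h => nxt_ne hp i h.symm)]
      simp

private lemma imgX_subset {Q Q' : Finset (Fin p)}
    (h : insert (0 : Fin (p+1)) (Fin.succ '' ↑Q) = insert 0 (Fin.succ '' ↑Q')) : Q ⊆ Q' := by
  intro i hi
  have hm : (Fin.succ i : Fin (p+1)) ∈ insert (0 : Fin (p+1)) (Fin.succ '' ↑Q') := by
    rw [← h]; exact Set.mem_insert_of_mem _ ⟨i, hi, rfl⟩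
  rcases hm with h0 | ⟨j, hj, hji⟩
  · exact absurd h0 (Fin.succ_ne_zero i)
  · rwa [← Fin.succ_injective _ hji]

private lemma imgX_ne {Q Q' : Finset (Fin p)} (h : Q ≠ Q') :
    insert (0 : Fin (p+1)) (Fin.succ '' ↑Q) ≠ insert 0 (Fin.succ '' ↑Q') := by
  intro he
  exact h ((imgX_subset he).antisymm (imgX_subset he.symm))

private lemma neXY (hp : 2 ≤ p) (i : Fin p) :
    insert (0 : Fin (p+1)) (Fin.succ '' ↑({i} : Finset (Fin p))) ≠
      ({i.succ, 0, (nxt i).succ} : Set (Fin (p+1))) := by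
  intro he
  have hmem : ((nxt i).succ : Fin (p+1)) ∈
      insert (0 : Fin (p+1)) (Fin.succ '' ↑({i} : Finset (Fin p))) := by
    rw [he]; right; right; exact Set.mem_singleton _
  rcases hmem with h0 | ⟨j, hj, hji⟩
  · exact Fin.succ_ne_zero _ h0
  · simp only [Finset.coe_singleton, Set.mem_singleton_iff] at hj
    exact nxt_ne hp i (Fin.succ_injective _ (hj ▸ hji)).symm

private lemma neYY' (i : Fin p) :
    ({i.succ, 0, (nxt i).succ} : Set (Fin (p+1))) ≠ {(nxt i).succ, i.succ} := by
  intro he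
  have h0 : (0 : Fin (p+1)) ∈ ({(nxt i).succ, i.succ} : Set (Fin (p+1))) := by
    rw [← he]; exact Or.inr (Or.inl rfl)
  rcases h0 with h | h
  · exact Fin.succ_ne_zero _ h.symm
  · exact Fin.succ_ne_zero _ h.symm

private lemma neXZ {Q : Finset (Fin p)} {i : Fin p} (h2 : 2 ≤ Q.card) (hi : i ∈ Q) :
    insert (0 : Fin (p+1)) (Fin.succ '' ↑Q) ≠ ({i.succ, 0} : Set (Fin (p+1))) := by
  intro he
  obtain ⟨j, hj, hji⟩ := Finset.exists_mem_ne (s := Q) (by omega) i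
  have hmem : (Fin.succ j : Fin (p+1)) ∈ ({i.succ, 0} : Set (Fin (p+1))) := by
    rw [← he]; exact Set.mem_insert_of_mem _ ⟨j, hj, rfl⟩
  rcases hmem with h | h
  · exact hji (Fin.succ_injective _ h)
  · exact Fin.succ_ne_zero _ h

private lemma hcol_rlid (hp : 2 ≤ p) : IsRlidColoring (Hgraph p) (hcol p) := by
  intro u v hadj _
  match u, v with
  | Sum.inl Q, Sum.inl Q' =>
    rw [imgX, imgX]; exact imgX_ne (adjXX.mp hadj)
  | Sum.inl Q, Sum.inr (Sum.inl i) =>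
    have hQ := adjXY.mp hadj; subst hQ
    rw [imgX, imgY]; exact neXY hp i
  | Sum.inr (Sum.inl i), Sum.inl Q =>
    have hQ := adjXY.mp hadj.symm; subst hQ
    rw [imgX, imgY]; exact (neXY hp i).symm
  | Sum.inl Q, Sum.inr (Sum.inr (Sum.inl i)) => exact absurd hadj (by simp [Hgraph])
  | Sum.inr (Sum.inr (Sum.inl i)), Sum.inl Q => exact absurd hadj.symm (by simp [Hgraph])
  | Sum.inl Q, Sum.inr (Sum.inr (Sum.inr i)) =>
    obtain ⟨h2, hi⟩ := adjXZ.mp hadj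
    rw [imgX, imgZ hp]; exact neXZ h2 hi
  | Sum.inr (Sum.inr (Sum.inr i)), Sum.inl Q =>
    obtain ⟨h2, hi⟩ := adjXZ.mp hadj.symm
    rw [imgX, imgZ hp]; exact (neXZ h2 hi).symm
  | Sum.inr (Sum.inl i), Sum.inr (Sum.inl j) => exact absurd hadj (by simp [Hgraph])
  | Sum.inr (Sum.inl i), Sum.inr (Sum.inr (Sum.inl j)) =>
    have hij := adjYY'.mp hadj; subst hij
    rw [imgY, imgY']; exact neYY' i
  | Sum.inr (Sum.inr (Sum.inl j)), Sum.inr (Sum.inl i) =>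
    have hij := adjYY'.mp hadj.symm; subst hij
    rw [imgY, imgY']; exact (neYY' i).symm
  | Sum.inr (Sum.inl i), Sum.inr (Sum.inr (Sum.inr j)) => exact absurd hadj (by simp [Hgraph])
  | Sum.inr (Sum.inr (Sum.inr j)), Sum.inr (Sum.inl i) => exact absurd hadj.symm (by simp [Hgraph])
  | Sum.inr (Sum.inr (Sum.inl i)), Sum.inr (Sum.inr (Sum.inl j)) => exact absurd hadj (by simp [Hgraph])
  | Sum.inr (Sum.inr (Sum.inl i)), Sum.inr (Sum.inr (Sum.inr j)) => exact absurd hadj (by simp [Hgraph])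
  | Sum.inr (Sum.inr (Sum.inr i)), Sum.inr (Sum.inr (Sum.inl j)) => exact absurd hadj.symm (by simp [Hgraph])
  | Sum.inr (Sum.inr (Sum.inr i)), Sum.inr (Sum.inr (Sum.inr j)) => exact absurd hadj (by simp [Hgraph])

end Aux

section Aux2

variable {p : ℕ}

private lemma cn_inl_subset {Q Q' : Finset (Fin p)}
    (h : closedNbhd (Hgraph p) (Sum.inl Q) = closedNbhd (Hgraph p) (Sum.inl Q')) : Q ⊆ Q' := by
  intro i hi
  by_cases h2 : 2 ≤ Q.card
  · have hz : Sum.inr (Sum.inr (Sum.inr i)) ∈ closedNbhd (Hgraph p) (Sum.inl Q) :=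
      mem_cn.mpr (Or.inr (adjXZ.mpr ⟨h2, hi⟩))
    rw [h] at hz
    rcases mem_cn.mp hz with he | ha
    · exact absurd he (by simp)
    · exact (adjXZ.mp ha).2
  · have hc1 : Q.card ≤ 1 := by omega
    have hQ : Q = {i} := Finset.eq_singleton_iff_unique_mem.mpr
      ⟨hi, fun j hj => Finset.card_le_one.mp hc1 j hj i hi⟩
    have hy : Sum.inr (Sum.inl i) ∈ closedNbhd (Hgraph p) (Sum.inl Q) :=
      mem_cn.mpr (Or.inr (adjXY.mpr hQ))
    rw [h] at hy
    rcases mem_cn.mp hy with he | ha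
    · exact absurd he (by simp)
    · rw [adjXY.mp ha]; exact Finset.mem_singleton_self i

private lemma no_small (hp : 2 ≤ p) {k : ℕ} (hk : k ≤ p)
    (c : Finset (Fin p) ⊕ (Fin p ⊕ Fin p ⊕ Fin p) → Fin k)
    (hc : IsRlidColoring (Hgraph p) c) : False := by
  match k, hk with
  | 0, _ => exact (c (Sum.inl ∅)).elim0
  | (k' + 1), hk =>
  set a := c (Sum.inl ∅) with ha_def
  have ha : ∀ Q : Finset (Fin p), a ∈ c '' closedNbhd (Hgraph p) (Sum.inl Q) := by
    intro Q
    refine ⟨Sum.inl ∅, ?_, rfl⟩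
    by_cases hQ : Q = ∅
    · exact mem_cn.mpr (Or.inl (by rw [hQ]))
    · exact mem_cn.mpr (Or.inr (adjXX.mpr hQ))
  set f : Finset (Fin p) → Finset (Fin (k' + 1)) := fun Q =>
    ((Set.toFinite (c '' closedNbhd (Hgraph p) (Sum.inl Q))).toFinset).erase a with hf_def
  have hinj : ∀ Q Q', f Q = f Q' → Q = Q' := by
    intro Q Q' hf
    by_contra hne
    have hadj : (Hgraph p).Adj (Sum.inl Q) (Sum.inl Q') := adjXX.mpr hne
    have hcn : closedNbhd (Hgraph p) (Sum.inl Q) ≠ closedNbhd (Hgraph p) (Sum.inl Q') :=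
      fun hcneq => hne ((cn_inl_subset hcneq).antisymm (cn_inl_subset hcneq.symm))
    apply hc _ _ hadj hcn
    have h1 := congrArg (insert a) hf
    rw [Finset.insert_erase (Set.Finite.mem_toFinset _ |>.mpr (ha Q)),
      Finset.insert_erase (Set.Finite.mem_toFinset _ |>.mpr (ha Q'))] at h1
    exact Set.Finite.toFinset_inj.mp h1
  have hcard : (Finset.univ : Finset (Finset (Fin p))).card ≤
      ((Finset.univ.erase a).powerset).card := by
    apply Finset.card_le_card_of_injOn f
    · intro Q _
      refine Finset.mem_powerset.mpr (fun x hx => ?_)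
      exact Finset.mem_erase.mpr ⟨(Finset.mem_erase.mp hx).1, Finset.mem_univ x⟩
    · intro Q _ Q' _ h
      exact hinj _ _ h
  rw [Finset.card_univ, Fintype.card_finset, Finset.card_powerset,
    Finset.card_erase_of_mem (Finset.mem_univ a), Finset.card_univ, Fintype.card_fin] at hcard
  have hlt : 2 ^ (k' + 1 - 1) < 2 ^ p := Nat.pow_lt_pow_right (by omega) (by omega)
  rw [Fintype.card_fin] at hcard
  omega

private lemma clique_card_le (hp : 2 ≤ p) {s : Finset (Finset (Fin p) ⊕ (Fin p ⊕ Fin p ⊕ Fin p))}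
    (hs : (Hgraph p).IsClique ↑s) : s.card ≤ 2 ^ p := by
  have h4 : 4 ≤ 2 ^ p := by
    calc (4 : ℕ) = 2 ^ 2 := rfl
    _ ≤ 2 ^ p := Nat.pow_le_pow_right (by omega) hp
  by_cases hall : ∀ v ∈ s, ∃ Q, v = Sum.inl Q
  · have hsub : s ⊆ Finset.univ.map ⟨Sum.inl, Sum.inl_injective⟩ := by
      intro v hv
      obtain ⟨Q, rfl⟩ := hall v hv
      exact Finset.mem_map.mpr ⟨Q, Finset.mem_univ _, rfl⟩
    calc s.card ≤ _ := Finset.card_le_card hsub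
      _ = 2 ^ p := by
        rw [Finset.card_map, Finset.card_univ, Fintype.card_finset, Fintype.card_fin]
  · push_neg at hall
    obtain ⟨w, hw, hwnl⟩ := hall
    match w, hwnl with
    | Sum.inl Q, hwnl => exact absurd rfl (hwnl Q)
    | Sum.inr (Sum.inl i), _ =>
      have hsub : s ⊆ {Sum.inr (Sum.inl i), Sum.inl {i}, Sum.inr (Sum.inr (Sum.inl i))} := by
        intro v hv
        by_cases hvw : v = Sum.inr (Sum.inl i)
        · simp [hvw]
        · have hadj := hs (Finset.mem_coe.mpr hv) (Finset.mem_coe.mpr hw) hvw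
          match v with
          | Sum.inl Q => simp [adjXY.mp hadj]
          | Sum.inr (Sum.inl j) => exact absurd hadj (by simp [Hgraph])
          | Sum.inr (Sum.inr (Sum.inl j)) =>
            have hij := adjYY'.mp hadj.symm
            simp [hij]
          | Sum.inr (Sum.inr (Sum.inr j)) => exact absurd hadj (by simp [Hgraph])
      have h3 : s.card ≤ 3 := by
        refine le_trans (Finset.card_le_card hsub) ?_
        refine le_trans (Finset.card_insert_le _ _) ?_
        refine Nat.succ_le_succ (le_trans (Finset.card_insert_le _ _) ?_)
        simp
      omega
    | Sum.inr (Sum.inr (Sum.inl i)), _ =>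
      have hsub : s ⊆ {Sum.inr (Sum.inr (Sum.inl i)), Sum.inr (Sum.inl i)} := by
        intro v hv
        by_cases hvw : v = Sum.inr (Sum.inr (Sum.inl i))
        · simp [hvw]
        · have hadj := hs (Finset.mem_coe.mpr hv) (Finset.mem_coe.mpr hw) hvw
          match v with
          | Sum.inl Q => exact absurd hadj (by simp [Hgraph])
          | Sum.inr (Sum.inl j) =>
            have hij := adjYY'.mp hadj
            simp [hij]
          | Sum.inr (Sum.inr (Sum.inl j)) => exact absurd hadj (by simp [Hgraph])
          | Sum.inr (Sum.inr (Sum.inr j)) => exact absurd hadj (by simp [Hgraph])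
      have h2 : s.card ≤ 2 := by
        refine le_trans (Finset.card_le_card hsub) ?_
        refine le_trans (Finset.card_insert_le _ _) ?_
        simp
      omega
    | Sum.inr (Sum.inr (Sum.inr i)), _ =>
      have hsub : s ⊆ insert (Sum.inr (Sum.inr (Sum.inr i)))
          (((Finset.univ.erase (∅ : Finset (Fin p))).erase {i}).map
            ⟨Sum.inl, Sum.inl_injective⟩) := by
        intro v hv
        by_cases hvw : v = Sum.inr (Sum.inr (Sum.inr i))
        · exact hvw ▸ Finset.mem_insert_self _ _
        · have hadj := hs (Finset.mem_coe.mpr hv) (Finset.mem_coe.mpr hw) hvw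
          match v with
          | Sum.inl Q =>
            obtain ⟨h2, hiQ⟩ := adjXZ.mp hadj
            refine Finset.mem_insert_of_mem (Finset.mem_map.mpr ⟨Q, ?_, rfl⟩)
            refine Finset.mem_erase.mpr ⟨?_, Finset.mem_erase.mpr ⟨?_, Finset.mem_univ _⟩⟩
            · intro h; rw [h, Finset.card_singleton] at h2; omega
            · intro h; rw [h, Finset.card_empty] at h2; omega
          | Sum.inr (Sum.inl j) => exact absurd hadj (by simp [Hgraph])
          | Sum.inr (Sum.inr (Sum.inl j)) => exact absurd hadj (by simp [Hgraph])
          | Sum.inr (Sum.inr (Sum.inr j)) => exact absurd hadj (by simp [Hgraph])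
      have hc2 : (((Finset.univ.erase (∅ : Finset (Fin p))).erase {i}).map
          (⟨Sum.inl, Sum.inl_injective⟩ :
            Finset (Fin p) ↪ (Finset (Fin p) ⊕ (Fin p ⊕ Fin p ⊕ Fin p)))).card = 2 ^ p - 2 := by
        rw [Finset.card_map, Finset.card_erase_of_mem
          (Finset.mem_erase.mpr ⟨Finset.singleton_ne_empty i, Finset.mem_univ _⟩),
          Finset.card_erase_of_mem (Finset.mem_univ _), Finset.card_univ,
          Fintype.card_finset, Fintype.card_fin]
        omega
      have := Finset.card_le_card hsub
      have := Finset.card_insert_le (Sum.inr (Sum.inr (Sum.inr i)) :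
        Finset (Fin p) ⊕ (Fin p ⊕ Fin p ⊕ Fin p))
        (((Finset.univ.erase (∅ : Finset (Fin p))).erase {i}).map ⟨Sum.inl, Sum.inl_injective⟩)
      omega

end Aux2

/-- For every `p ≥ 2`, `χ_rlid(H_p) = p + 1 = log₂(ω(H_p)) + 1`, with
`ω(H_p) = 2^p`. -/
theorem rlid_Hgraph (p : ℕ) (hp : 2 ≤ p) :
    rlidChromNum (Hgraph p) = p + 1 ∧ (Hgraph p).cliqueNum = 2 ^ p := by
  constructor
  · have hmem : (p + 1) ∈ {k : ℕ | ∃ c : _ → Fin k, IsRlidColoring (Hgraph p) c} :=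
      ⟨hcol p, hcol_rlid hp⟩
    refine le_antisymm (Nat.sInf_le hmem) ?_
    refine le_csInf ⟨_, hmem⟩ ?_
    rintro k ⟨c, hc⟩
    by_contra hlt
    push_neg at hlt
    exact no_small hp (by omega) c hc
  · refine le_antisymm ?_ ?_
    · obtain ⟨s, hs⟩ := (Hgraph p).exists_isNClique_cliqueNum
      rw [← hs.card_eq]
      exact clique_card_le hp hs.isClique
    · have hcl : (Hgraph p).IsClique
          (↑(Finset.univ.map (⟨Sum.inl, Sum.inl_injective⟩ :
            Finset (Fin p) ↪ (Finset (Fin p) ⊕ (Fin p ⊕ Fin p ⊕ Fin p)))) :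
            Set (Finset (Fin p) ⊕ (Fin p ⊕ Fin p ⊕ Fin p))) := by
        intro u hu v hv huv
        simp only [Finset.coe_map, Set.mem_image, Finset.mem_coe, Finset.mem_univ,
          Function.Embedding.coeFn_mk] at hu hv
        obtain ⟨Q, _, rfl⟩ := hu
        obtain ⟨Q', _, rfl⟩ := hv
        exact adjXX.mpr (fun h => huv (by rw [h]))
      have hle := SimpleGraph.IsClique.card_le_cliqueNum (tc := hcl)
      rwa [Finset.card_map, Finset.card_univ, Fintype.card_finset, Fintype.card_fin] at hle
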